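/- arXiv:1909.05023 — 2 statements merged into one kernel-verified Lean document; each statement's English description precedes it below -/
import Mathlib

section
/- Fix real $k' < 0$, integer $n \geq 1$, and reals $a' > 0$, $x$ with $x > 0$. Then $\int_{\mathbb{R}} \frac{e^{itx}}{(t + ik')^n}\,dt = \frac{2\pi i^n}{(n-1)!} x^{n-1} e^{k'x}$, where the integral is taken as an improper Riemann integral (principal value). -/
/-!
Instead of a contour integral we use Fourier inversion. For `a < 0` the function
`f(s) = 1_{s > 0} s^m e^{as}` is integrable with Fourier transform `m! / (2πiξ - a)^(m+1)`; after
the substitution `t = 2πξ` this is `m! / i^(m+1) · (t + ia)^(-(m+1))`. For `n = m + 1 ≥ 2` that is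
integrable, and inversion at the continuity point `x > 0` gives
`∫ e^{itx} / (t + ia)^n dt = 2π i^n / (n-1)! · f(x)`.
For `n = 1` the integrand is not integrable: integrating by parts on `[-T, T]` expresses the
truncated integral through the one for `n = 2`, plus boundary terms that vanish as `T → ∞`.
-/

open Complex intervalIntegral
open MeasureTheory Set Filter Topology Nat FourierTransform Real

lemma integrableOn_pow_mul_cexp_neg_mul {z : ℂ} (hz : 0 < z.re) (n : ℕ) :
    IntegrableOn (fun s : ℝ => (s : ℂ) ^ n * cexp (-z * s)) (Ioi 0) := by
  refine Integrable.mono' (integrableOn_rpow_mul_exp_neg_mul_rpow (s := n)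
    (by linarith [n.cast_nonneg (α := ℝ)]) zero_lt_one hz) (by fun_prop) ?_
  filter_upwards [ae_restrict_mem measurableSet_Ioi] with s hs
  simp [norm_exp, mul_re, abs_of_pos (mem_Ioi.mp hs)]

lemma tendsto_pow_mul_cexp_neg_mul_atTop {z : ℂ} (hz : 0 < z.re) (n : ℕ) :
    Tendsto (fun s : ℝ => (s : ℂ) ^ n * cexp (-z * s)) atTop (𝓝 0) := by
  refine squeeze_zero_norm' ?_ (tendsto_rpow_mul_exp_neg_mul_atTop_nhds_zero n _ hz)
  filter_upwards [eventually_ge_atTop 0] with s hs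
  simp [norm_exp, mul_re, abs_of_nonneg hs]

theorem integral_pow_mul_cexp_neg_mul_Ioi {z : ℂ} (hz : 0 < z.re) (n : ℕ) :
    ∫ s in Ioi (0 : ℝ), (s : ℂ) ^ n * cexp (-z * s) = n ! / z ^ (n + 1) := by
  have hz0 : z ≠ 0 := by rintro rfl; simp at hz
  induction n with
  | zero => simpa [neg_div] using integral_exp_mul_complex_Ioi (a := -z) (by simpa using hz) 0
  | succ n ih =>
    have hu : ∀ s ∈ Ioi (0 : ℝ), HasDerivAt (fun s : ℝ => (s : ℂ) ^ (n + 1))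
        ((n + 1 : ℂ) * (s : ℂ) ^ n) s := fun s _ => by
      simpa using (hasDerivAt_pow (n + 1) (s : ℂ)).comp_ofReal
    have hv : ∀ s ∈ Ioi (0 : ℝ), HasDerivAt (fun s : ℝ => -cexp (-z * s) / z)
        (cexp (-z * s)) s := fun s _ => by
      refine ((((hasDerivAt_id (s : ℂ)).const_mul (-z)).cexp).comp_ofReal).neg.div_const z
        |>.congr_deriv ?_
      simp only [id, mul_one]
      field_simp
    have hparts := integral_Ioi_mul_deriv_eq_deriv_mul hu hv
      (integrableOn_pow_mul_cexp_neg_mul hz (n + 1))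
      (IntegrableOn.congr_fun
        ((integrableOn_pow_mul_cexp_neg_mul hz n).const_mul (-(n + 1 : ℂ) / z))
        (fun s _ => by simp only [Pi.mul_apply]; ring) measurableSet_Ioi)
      (a' := 0) (b' := 0) ?_ ?_
    · have hrec : ∫ s in Ioi (0 : ℝ), (n + 1 : ℂ) * (s : ℂ) ^ n * (-cexp (-z * s) / z)
          = -(n + 1 : ℂ) / z * ∫ s in Ioi (0 : ℝ), (s : ℂ) ^ n * cexp (-z * s) := by
        rw [← MeasureTheory.integral_const_mul]
        congr 1 with s
        ring
      rw [hparts, hrec, ih, factorial_succ]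
      push_cast
      field_simp
      ring
    · have hcont : Continuous fun s : ℝ => (s : ℂ) ^ (n + 1) * (-cexp (-z * s) / z) := by
        fun_prop
      simpa [Pi.mul_def] using (hcont.tendsto 0).mono_left nhdsWithin_le_nhds
    · simpa [Pi.mul_def, neg_div, mul_div_assoc] using
        ((tendsto_pow_mul_cexp_neg_mul_atTop hz (n + 1)).div_const z).neg

lemma integrable_inv_sq_add_sq {a : ℝ} (ha : a ≠ 0) :
    Integrable fun t : ℝ => (t ^ 2 + a ^ 2)⁻¹ := by
  refine ((integrable_inv_one_add_sq.comp_div ha).const_mul (a ^ 2)⁻¹).congr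
    (Eventually.of_forall fun t => ?_)
  field_simp
  ring

noncomputable def poleIntegrand (a x : ℝ) (n : ℕ) (t : ℝ) : ℂ :=
  cexp (I * t * x) / ((t : ℂ) + I * a) ^ n

section poleIntegrand

variable {a x : ℝ} {n : ℕ}

lemma ofReal_add_I_mul_ne_zero (ha : a ≠ 0) (t : ℝ) : (t : ℂ) + I * a ≠ 0 := by
  intro h
  simpa [ha] using congrArg im h

lemma sq_norm_ofReal_add_I_mul (t a : ℝ) : ‖(t : ℂ) + I * a‖ ^ 2 = t ^ 2 + a ^ 2 := by
  rw [Complex.sq_norm, Complex.normSq_apply]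
  simp [sq]

lemma abs_re_le_norm_ofReal_add_I_mul (t a : ℝ) : |t| ≤ ‖(t : ℂ) + I * a‖ := by
  simpa using abs_re_le_norm ((t : ℂ) + I * a)

lemma abs_im_le_norm_ofReal_add_I_mul (t a : ℝ) : |a| ≤ ‖(t : ℂ) + I * a‖ := by
  simpa using abs_im_le_norm ((t : ℂ) + I * a)

lemma norm_poleIntegrand (a x : ℝ) (n : ℕ) (t : ℝ) :
    ‖poleIntegrand a x n t‖ = (‖(t : ℂ) + I * a‖ ^ n)⁻¹ := by
  simp [poleIntegrand, norm_exp]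

lemma continuous_poleIntegrand (ha : a ≠ 0) : Continuous (poleIntegrand a x n) :=
  Continuous.div (by fun_prop) (by fun_prop) fun t => pow_ne_zero n (ofReal_add_I_mul_ne_zero ha t)

lemma integrable_poleIntegrand (ha : a ≠ 0) (hn : 2 ≤ n) :
    Integrable (poleIntegrand a x n) := by
  obtain ⟨m, rfl⟩ := Nat.exists_eq_add_of_le' hn
  refine ((integrable_inv_sq_add_sq ha).const_mul (|a| ^ m)⁻¹).mono'
    (continuous_poleIntegrand ha).aestronglyMeasurable (Eventually.of_forall fun t => ?_)
  have hpos : 0 < |a| := abs_pos.mpr ha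
  rw [norm_poleIntegrand, pow_add, sq_norm_ofReal_add_I_mul, ← mul_inv]
  gcongr
  exact abs_im_le_norm_ofReal_add_I_mul t a

lemma tendsto_poleIntegrand_cocompact (hn : n ≠ 0) :
    Tendsto (poleIntegrand a x n) (cocompact ℝ) (𝓝 0) := by
  rw [tendsto_zero_iff_norm_tendsto_zero]
  simp_rw [norm_poleIntegrand]
  have : Tendsto (fun t : ℝ => ‖(t : ℂ) + I * a‖) (cocompact ℝ) atTop :=
    tendsto_atTop_mono (fun t => abs_re_le_norm_ofReal_add_I_mul t a) tendsto_norm_cocompact_atTop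
  exact ((tendsto_pow_atTop hn).comp this).inv_tendsto_atTop

lemma hasDerivAt_poleIntegrand (ha : a ≠ 0) (t : ℝ) :
    HasDerivAt (poleIntegrand a x n)
      (I * x * poleIntegrand a x n t - n * poleIntegrand a x (n + 1) t) t := by
  have hz := ofReal_add_I_mul_ne_zero ha t
  have hnum : HasDerivAt (fun t : ℝ => cexp (I * t * x)) (cexp (I * t * x) * (I * x)) t := by
    simpa using ((((hasDerivAt_id (t : ℂ)).const_mul I).mul_const (x : ℂ)).cexp).comp_ofReal
  have hden : HasDerivAt (fun t : ℝ => ((t : ℂ) + I * a) ^ n)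
      (n * ((t : ℂ) + I * a) ^ (n - 1)) t := by
    simpa using (((hasDerivAt_id (t : ℂ)).add_const (I * a)).pow n).comp_ofReal
  refine (hnum.div hden (pow_ne_zero n hz)).congr_deriv ?_
  rcases n.eq_zero_or_pos with rfl | hn
  · simp [poleIntegrand]; ring
  · obtain ⟨m, rfl⟩ := Nat.exists_eq_add_of_le' hn
    simp only [poleIntegrand, add_tsub_cancel_right]
    field_simp
    ring

lemma intervalIntegral_poleIntegrand_eq (ha : a ≠ 0) (hx : x ≠ 0) (n : ℕ) (T : ℝ) :
    ∫ t in (-T)..T, poleIntegrand a x n t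
      = (poleIntegrand a x n T - poleIntegrand a x n (-T)
          + n * ∫ t in (-T)..T, poleIntegrand a x (n + 1) t) / (I * x) := by
  have hint (m : ℕ) : IntervalIntegrable (poleIntegrand a x m) volume (-T) T :=
    (continuous_poleIntegrand ha).intervalIntegrable _ _
  have hparts := integral_eq_sub_of_hasDerivAt (fun t _ => hasDerivAt_poleIntegrand ha t)
    (((hint n).const_mul (I * x)).sub ((hint (n + 1)).const_mul n))
  rw [integral_sub ((hint n).const_mul _) ((hint (n + 1)).const_mul _),
    intervalIntegral.integral_const_mul, intervalIntegral.integral_const_mul] at hparts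
  rw [eq_div_iff (mul_ne_zero I_ne_zero (ofReal_ne_zero.mpr hx))]
  linear_combination hparts

lemma tendsto_intervalIntegral_poleIntegrand_of_succ (ha : a ≠ 0) (hx : x ≠ 0) (hn : n ≠ 0)
    {L : ℂ}
    (h : Tendsto (fun T => ∫ t in (-T)..T, poleIntegrand a x (n + 1) t) atTop (𝓝 L)) :
    Tendsto (fun T => ∫ t in (-T)..T, poleIntegrand a x n t) atTop (𝓝 (n * L / (I * x))) := by
  have hdecay := tendsto_poleIntegrand_cocompact (a := a) (x := x) hn
  have hright := hdecay.mono_left atTop_le_cocompact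
  have hleft := hdecay.comp (tendsto_neg_atTop_atBot.mono_right atBot_le_cocompact)
  have := ((hright.sub hleft).add (h.const_mul (n : ℂ))).div_const (I * x)
  rw [sub_self, zero_add] at this
  exact this.congr fun T => (intervalIntegral_poleIntegrand_eq ha hx n T).symm

end poleIntegrand

noncomputable def halfLinePowExp (a : ℝ) (m : ℕ) : ℝ → ℂ :=
  (Ioi 0).indicator fun s : ℝ => (s : ℂ) ^ m * cexp (a * s)

section halfLinePowExp

variable {a : ℝ} {m : ℕ}

lemma halfLinePowExp_of_pos {x : ℝ} (hx : 0 < x) : halfLinePowExp a m x = x ^ m * cexp (a * x) :=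
  indicator_of_mem hx _

lemma continuousAt_halfLinePowExp {x : ℝ} (hx : 0 < x) : ContinuousAt (halfLinePowExp a m) x := by
  refine ContinuousAt.congr_of_eventuallyEq
    (by fun_prop : Continuous fun s : ℝ => (s : ℂ) ^ m * cexp (a * s)).continuousAt ?_
  filter_upwards [Ioi_mem_nhds hx] with s hs using halfLinePowExp_of_pos hs

lemma integrable_halfLinePowExp (ha : a < 0) : Integrable (halfLinePowExp a m) :=
  (integrable_indicator_iff measurableSet_Ioi).2 <| by
    simpa using integrableOn_pow_mul_cexp_neg_mul (z := -a) (by simpa using ha) m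

lemma fourier_halfLinePowExp (ha : a < 0) (ξ : ℝ) :
    𝓕 (halfLinePowExp a m) ξ = m ! / (2 * π * I * ξ - a) ^ (m + 1) := by
  have hz : 0 < (2 * π * I * ξ - a).re := by simpa using ha
  rw [fourier_real_eq_integral_exp_smul, ← integral_pow_mul_cexp_neg_mul_Ioi hz m,
    ← MeasureTheory.integral_indicator measurableSet_Ioi]
  congr 1 with s
  simp only [halfLinePowExp, indicator_apply]
  split_ifs
  · rw [smul_eq_mul, mul_left_comm, ← Complex.exp_add]
    push_cast
    ring_nf
  · exact smul_zero _

lemma fourier_halfLinePowExp_div_two_pi (ha : a < 0) (t : ℝ) :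
    𝓕 (halfLinePowExp a m) (t / (2 * π)) = m ! / I ^ (m + 1) * poleIntegrand a 0 (m + 1) t := by
  have hrot : 2 * π * I * ↑(t / (2 * π)) - a = I * ((t : ℂ) + I * a) := by
    rw [ofReal_div, ofReal_mul, ofReal_ofNat, mul_right_comm,
      mul_div_cancel₀ _ (by exact_mod_cast two_pi_pos.ne')]
    linear_combination (-(a : ℂ)) * I_sq
  rw [fourier_halfLinePowExp ha, hrot, poleIntegrand, mul_pow, ofReal_zero, mul_zero,
    Complex.exp_zero, mul_one_div, div_div]

lemma integrable_fourier_halfLinePowExp (ha : a < 0) (hm : 1 ≤ m) :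
    Integrable (𝓕 (halfLinePowExp a m)) := by
  refine (((integrable_poleIntegrand (x := 0) ha.ne (by omega : 2 ≤ m + 1)).comp_mul_left'
    two_pi_pos.ne').const_mul ((m ! : ℂ) / I ^ (m + 1))).congr (Eventually.of_forall fun ξ => ?_)
  dsimp only
  rw [← fourier_halfLinePowExp_div_two_pi ha, mul_div_cancel_left₀ _ two_pi_pos.ne']

end halfLinePowExp

lemma integral_cexp_mul_fourier_div_two_pi {f : ℝ → ℂ} (hf : Integrable f)
    (hFf : Integrable (𝓕 f)) {x : ℝ} (hx : ContinuousAt f x) :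
    ∫ t : ℝ, cexp (I * t * x) * 𝓕 f (t / (2 * π)) = 2 * π * f x := by
  have hinv := hf.fourierInv_fourier_eq hFf hx
  rw [fourierInv_eq'] at hinv
  have hsub := Measure.integral_comp_mul_left
    (fun t : ℝ => cexp (I * t * x) * 𝓕 f (t / (2 * π))) (2 * π)
  have hrescaled :
      ∫ ξ : ℝ, cexp (I * ↑(2 * π * ξ) * x) * 𝓕 f (2 * π * ξ / (2 * π)) = f x := by
    rw [← hinv]
    congr 1 with ξ
    rw [smul_eq_mul, mul_div_cancel_left₀ _ (by positivity)]
    simp only [RCLike.inner_apply, conj_trivial]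
    push_cast
    ring_nf
  rw [hrescaled, abs_of_pos (by positivity), real_smul] at hsub
  rw [hsub, ← mul_assoc, ofReal_inv, ofReal_mul, ofReal_ofNat,
    mul_inv_cancel₀ (by exact_mod_cast two_pi_pos.ne'), one_mul]

theorem integral_poleIntegrand {a x : ℝ} {n : ℕ} (ha : a < 0) (hn : 2 ≤ n) (hx : 0 < x) :
    ∫ t, poleIntegrand a x n t = 2 * π * I ^ n / (n - 1)! * x ^ (n - 1) * cexp (a * x) := by
  obtain ⟨m, rfl⟩ : ∃ m, n = m + 1 := ⟨n - 1, by omega⟩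
  rw [add_tsub_cancel_right]
  have hinv := integral_cexp_mul_fourier_div_two_pi (integrable_halfLinePowExp ha)
    (integrable_fourier_halfLinePowExp ha (by omega)) (continuousAt_halfLinePowExp (m := m) hx)
  have hkernel (t : ℝ) : cexp (I * t * x) * 𝓕 (halfLinePowExp a m) (t / (2 * π))
      = m ! / I ^ (m + 1) * poleIntegrand a x (m + 1) t := by
    rw [fourier_halfLinePowExp_div_two_pi ha, poleIntegrand, poleIntegrand, ofReal_zero, mul_zero,
      Complex.exp_zero]
    ring
  simp_rw [hkernel] at hinv
  rw [MeasureTheory.integral_const_mul, halfLinePowExp_of_pos hx] at hinv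
  have hfact : (m ! : ℂ) ≠ 0 := by exact_mod_cast m.factorial_ne_zero
  rw [← mul_right_inj' (div_ne_zero hfact (pow_ne_zero (m + 1) I_ne_zero)), hinv]
  field_simp

theorem residue_integral_pos (k' : ℝ) (hk : k' < 0) (n : ℕ) (hn : 1 ≤ n)
    (x : ℝ) (hx : 0 < x) :
    Filter.Tendsto
      (fun T : ℝ => ∫ t : ℝ in (-T)..T, Complex.exp (I * t * x) / ((t : ℂ) + I * k') ^ n)
      Filter.atTop
      (nhds ((2 * Real.pi * I ^ n / (Nat.factorial (n - 1)) : ℂ) *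
        (x : ℂ) ^ (n - 1) * Complex.exp (k' * x))) := by
  have hlim (m : ℕ) (hm : 2 ≤ m) : Tendsto (fun T => ∫ t in (-T)..T, poleIntegrand k' x m t)
      atTop (𝓝 (∫ t, poleIntegrand k' x m t)) :=
    intervalIntegral_tendsto_integral (integrable_poleIntegrand hk.ne hm) tendsto_neg_atTop_atBot
      tendsto_id
  show Tendsto (fun T => ∫ t in (-T)..T, poleIntegrand k' x n t) atTop _
  rcases hn.eq_or_lt with rfl | hn
  · have h := tendsto_intervalIntegral_poleIntegrand_of_succ hk.ne hx.ne' one_ne_zero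
      (hlim 2 le_rfl)
    rw [integral_poleIntegrand hk le_rfl hx] at h
    convert h using 2
    have : (x : ℂ) ≠ 0 := by exact_mod_cast hx.ne'
    field_simp
    ring
  · rw [← integral_poleIntegrand hk hn hx]
    exact hlim n hn
end

section
/- Fix real $k' < 0$, integer $n \geq 1$ and real $x < 0$. Then $\int_{\mathbb{R}} \frac{e^{itx}}{(t+ik')^n}\,dt = 0$ (as a principal-value improper integral). -/
open Complex intervalIntegral

-- norm of the integrand
lemma norm_integrand (k' x : ℝ) (n : ℕ) (z : ℂ) (hz : z + I * k' ≠ 0) :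
    ‖Complex.exp (I * z * x) / (z + I * k') ^ n‖
      = Real.exp (-(z.im) * x) / ‖z + I * k'‖ ^ n := by
  rw [norm_div, norm_pow, Complex.norm_exp]
  congr 2
  simp [Complex.mul_re, Complex.mul_im]


lemma exp_integral_eval (x T : ℝ) (hx : x < 0) :
    ∫ y : ℝ in (-T)..0, Real.exp (-x * y) = (1 - Real.exp (x * T)) / (-x) := by
  have hx0 : -x ≠ 0 := by linarith
  have key : ∀ y ∈ Set.uIcc (-T) (0:ℝ), HasDerivAt (fun y => Real.exp (-x * y) / (-x))
      (Real.exp (-x * y)) y := by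
    intro y _
    have h1 : HasDerivAt (fun y : ℝ => -x * y) (-x) y := by
      simpa using (hasDerivAt_id y).const_mul (-x)
    have h2 := h1.exp.div_const (-x)
    have hxx : x / x = 1 := div_self (by linarith)
    simpa [mul_div_assoc, neg_div, div_neg, hxx] using h2
  rw [intervalIntegral.integral_eq_sub_of_hasDerivAt key
    ((Real.continuous_exp.comp (continuous_const.mul continuous_id)).intervalIntegrable _ _)]
  have hx' : x ≠ 0 := by linarith
  field_simp
  simp only [mul_zero, neg_zero, Real.exp_zero]
  ring


lemma side_bound (k' x : ℝ) (hx : x < 0) (n : ℕ) (hn : 1 ≤ n)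
    (T a : ℝ) (hT : 1 ≤ T) (ha : |a| = T) :
    ‖∫ y : ℝ in (-T)..0, Complex.exp (I * ((a : ℂ) + y * I) * x) / (((a : ℂ) + y * I) + I * k') ^ n‖
      ≤ 1 / ((-x) * T) := by
  have hx0 : (0:ℝ) < -x := by linarith
  have hT0 : (0:ℝ) < T := by linarith
  have ha0 : a ≠ 0 := by intro h; rw [h] at ha; simp at ha; linarith
  have hden : ∀ y : ℝ, ((a : ℂ) + y * I) + I * k' ≠ 0 := by
    intro y h
    have : (((a : ℂ) + y * I) + I * k').re = a := by simp
    rw [h] at this; simp at this; exact ha0 this.symm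
  have hcont : Continuous fun y : ℝ =>
      Complex.exp (I * ((a : ℂ) + y * I) * x) / (((a : ℂ) + y * I) + I * k') ^ n := by
    apply Continuous.div
    · fun_prop
    · fun_prop
    · exact fun y => pow_ne_zero _ (hden y)
  have hnorm : ∀ y : ℝ, ‖Complex.exp (I * ((a : ℂ) + y * I) * x) / (((a : ℂ) + y * I) + I * k') ^ n‖
      ≤ Real.exp (-x * y) / T := by
    intro y
    rw [norm_integrand k' x n _ (hden y)]
    have him : ((a : ℂ) + y * I).im = y := by simp
    rw [him]
    have h1 : T ≤ ‖((a : ℂ) + y * I) + I * k'‖ := by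
      rw [← ha]
      have : (((a : ℂ) + y * I) + I * k').re = a := by simp
      calc |a| = |(((a : ℂ) + y * I) + I * k').re| := by rw [this]
        _ ≤ ‖((a : ℂ) + y * I) + I * k'‖ := Complex.abs_re_le_norm _
    have h2 : T ≤ ‖((a : ℂ) + y * I) + I * k'‖ ^ n :=
      le_trans (le_trans h1 (le_self_pow₀ (le_trans hT h1) (by omega))) le_rfl
    have := mul_comm (-y) x
    rw [show -y * x = -x * y by ring]
    gcongr
  calc ‖∫ y : ℝ in (-T)..0, Complex.exp (I * ((a : ℂ) + y * I) * x) / (((a : ℂ) + y * I) + I * k') ^ n‖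
      ≤ ∫ y : ℝ in (-T)..0, ‖Complex.exp (I * ((a : ℂ) + y * I) * x) / (((a : ℂ) + y * I) + I * k') ^ n‖ :=
        intervalIntegral.norm_integral_le_integral_norm (by linarith)
    _ ≤ ∫ y : ℝ in (-T)..0, Real.exp (-x * y) / T := by
        apply intervalIntegral.integral_mono_on (by linarith)
        · exact (hcont.norm.intervalIntegrable _ _)
        · exact ((Real.continuous_exp.comp (continuous_const.mul continuous_id)).div_const T).intervalIntegrable _ _
        · exact fun y _ => hnorm y
    _ = ((1 - Real.exp (x * T)) / (-x)) / T := by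
        rw [intervalIntegral.integral_div, exp_integral_eval x T hx]
    _ ≤ 1 / ((-x) * T) := by
        rw [div_div]
        gcongr
        nlinarith [Real.exp_pos (x * T)]

lemma rect_bound (k' : ℝ) (hk : k' < 0) (n : ℕ) (hn : 1 ≤ n) (x : ℝ) (hx : x < 0)
    (T : ℝ) (hT : 2 * |k'| + 2 ≤ T) :
    ‖∫ t : ℝ in (-T)..T, Complex.exp (I * t * x) / ((t : ℂ) + I * k') ^ n‖
      ≤ 4 * Real.exp (T * x) + 2 / ((-x) * T) := by
  have hk' : 0 ≤ |k'| := abs_nonneg _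
  have hT2 : (2:ℝ) ≤ T := by linarith
  have hT0 : (0:ℝ) < T := by linarith
  have hTk : T - |k'| ≥ 1 := by linarith [abs_nonneg k']
  set f : ℂ → ℂ := fun z => Complex.exp (I * z * x) / (z + I * k') ^ n with hf
  have hdiff : DifferentiableOn ℂ f
      (Set.uIcc ((⟨-T,-T⟩:ℂ)).re ((⟨T,0⟩:ℂ)).re ×ℂ Set.uIcc ((⟨-T,-T⟩:ℂ)).im ((⟨T,0⟩:ℂ)).im) := by
    apply DifferentiableOn.div
    · exact Differentiable.differentiableOn (by fun_prop)
    · exact Differentiable.differentiableOn (by fun_prop)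
    · intro z hz
      apply pow_ne_zero
      intro h
      have him : (z + I * (k':ℂ)).im = z.im + k' := by simp
      rw [h] at him
      simp at him
      have hzim : z.im ∈ Set.uIcc (-T) (0:ℝ) := (Complex.mem_reProdIm.mp hz).2
      rw [Set.uIcc_of_le (by linarith)] at hzim
      have := hzim.2
      linarith [him ▸ this]
  have h := Complex.integral_boundary_rect_eq_zero_of_differentiableOn f
    (⟨-T, -T⟩ : ℂ) (⟨T, 0⟩ : ℂ) hdiff
  simp only [Complex.ofReal_zero, zero_mul, add_zero, Complex.ofReal_neg] at h
  have hgoal : (∫ t : ℝ in (-T)..T, Complex.exp (I * t * x) / ((t : ℂ) + I * k') ^ n)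
      = ∫ t : ℝ in (-T)..T, f t := rfl
  rw [hgoal]
  have heq : (∫ t : ℝ in (-T)..T, f t) =
      (∫ t : ℝ in (-T)..T, f (↑t + -↑T * I)) + I • (∫ y : ℝ in (-T)..0, f (↑T + ↑y * I))
        - I • (∫ y : ℝ in (-T)..0, f (-↑T + ↑y * I)) := by
    linear_combination -h
  rw [heq]
  have hB1 : ‖∫ t : ℝ in (-T)..T, f (↑t + -↑T * I)‖ ≤ 4 * Real.exp (T * x) := by
    have hle : ∀ t ∈ Set.uIoc (-T) T, ‖f (↑t + -↑T * I)‖ ≤ Real.exp (T * x) / (T - |k'|) := by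
      intro t _
      have hden : ((t:ℂ) + -↑T * I) + I * k' ≠ 0 := by
        intro hcontra
        have : (((t:ℂ) + -↑T * I) + I * k').im = -T + k' := by simp
        rw [hcontra] at this; simp at this; linarith
      rw [hf, norm_integrand k' x n _ hden]
      have him : ((t:ℂ) + -↑T * I).im = -T := by simp
      rw [him]
      have h1 : T - |k'| ≤ ‖((t:ℂ) + -↑T * I) + I * k'‖ := by
        have himd : (((t:ℂ) + -↑T * I) + I * k').im = -T + k' := by simp
        calc T - |k'| ≤ |(-T) + k'| := by
              rw [show |(-T) + k'| = -((-T) + k') from abs_of_nonpos (by linarith)]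
              have habs : |k'| = -k' := abs_of_neg hk
              linarith
          _ = |(((t:ℂ) + -↑T * I) + I * k').im| := by rw [himd]
          _ ≤ ‖((t:ℂ) + -↑T * I) + I * k'‖ := Complex.abs_im_le_norm _
      have h2 : T - |k'| ≤ ‖((t:ℂ) + -↑T * I) + I * k'‖ ^ n :=
        le_trans h1 (le_self_pow₀ (le_trans hTk h1) (by omega))
      rw [show -(-T) * x = T * x by ring]
      gcongr
    calc ‖∫ t : ℝ in (-T)..T, f (↑t + -↑T * I)‖
        ≤ Real.exp (T * x) / (T - |k'|) * |T - (-T)| :=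
          intervalIntegral.norm_integral_le_of_norm_le_const hle
      _ ≤ 4 * Real.exp (T * x) := by
          rw [abs_of_pos (by linarith : (0:ℝ) < T - (-T))]
          rw [div_mul_eq_mul_div, div_le_iff₀ (by linarith)]
          nlinarith [Real.exp_pos (T * x)]
  have hB2 : ‖∫ y : ℝ in (-T)..0, f (↑T + ↑y * I)‖ ≤ 1 / ((-x) * T) := by
    have := side_bound k' x hx n hn T T (by linarith) (abs_of_pos hT0)
    simpa [hf] using this
  have hB3 : ‖∫ y : ℝ in (-T)..0, f (-↑T + ↑y * I)‖ ≤ 1 / ((-x) * T) := by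
    have := side_bound k' x hx n hn T (-T) (by linarith) (by rw [abs_neg, abs_of_pos hT0])
    simpa [hf] using this
  calc ‖(∫ t : ℝ in (-T)..T, f (↑t + -↑T * I)) + I • (∫ y : ℝ in (-T)..0, f (↑T + ↑y * I))
        - I • (∫ y : ℝ in (-T)..0, f (-↑T + ↑y * I))‖
      ≤ ‖(∫ t : ℝ in (-T)..T, f (↑t + -↑T * I)) + I • (∫ y : ℝ in (-T)..0, f (↑T + ↑y * I))‖
        + ‖I • (∫ y : ℝ in (-T)..0, f (-↑T + ↑y * I))‖ := norm_sub_le _ _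
    _ ≤ ‖∫ t : ℝ in (-T)..T, f (↑t + -↑T * I)‖ + ‖I • (∫ y : ℝ in (-T)..0, f (↑T + ↑y * I))‖
        + ‖I • (∫ y : ℝ in (-T)..0, f (-↑T + ↑y * I))‖ := by
          gcongr
          exact norm_add_le _ _
    _ ≤ 4 * Real.exp (T * x) + 1 / ((-x) * T) + 1 / ((-x) * T) := by
          simp only [norm_smul, Complex.norm_I, one_mul]
          gcongr
    _ = 4 * Real.exp (T * x) + 2 / ((-x) * T) := by ring

theorem residue_integral_neg (k' : ℝ) (hk : k' < 0) (n : ℕ) (hn : 1 ≤ n)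
    (x : ℝ) (hx : x < 0) :
    Filter.Tendsto
      (fun T : ℝ => ∫ t : ℝ in (-T)..T, Complex.exp (I * t * x) / ((t : ℂ) + I * k') ^ n)
      Filter.atTop (nhds 0) := by
  apply squeeze_zero_norm' (a := fun T : ℝ => 4 * Real.exp (T * x) + 2 / ((-x) * T)) ?_ ?_
  · filter_upwards [Filter.eventually_ge_atTop (2 * |k'| + 2)] with T hT
    exact rect_bound k' hk n hn x hx T hT
  · have h1 : Filter.Tendsto (fun T : ℝ => Real.exp (T * x)) Filter.atTop (nhds 0) := by
      apply Real.tendsto_exp_atBot.comp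
      exact Filter.Tendsto.atTop_mul_const_of_neg' hx Filter.tendsto_id
    have h2 : Filter.Tendsto (fun T : ℝ => 2 / ((-x) * T)) Filter.atTop (nhds 0) := by
      simp only [← div_div]
      exact Filter.Tendsto.div_atTop tendsto_const_nhds Filter.tendsto_id
    have h3 := (h1.const_mul 4).add h2
    simpa using h3
end
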